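/- arXiv:0902.1351 — 8 statements merged into one kernel-verified Lean document; each statement's English description precedes it below -/
import Mathlib

section
/- Let C be a family of 6-element subsets of a finite set such that any two distinct members of C intersect in exactly 3 elements. Let v = {v1,...,v6} ∈ C. If there is some u ∈ C with |u ∩ {v1,v2,v3}| ≤ 1, then at most 2 members of C contain {v1,v2,v3}. -/
/-!
Suppose three members `w₁, w₂, w₃` of `C` contain the triple `t`. Any two of them meet in
exactly `t`, so the sets `wᵢ \ t` are pairwise disjoint, and each meets `u` in
`3 - |u ∩ t| ≥ 2` points. Hence `u` contains at least `|u ∩ t| + 3 (3 - |u ∩ t|) ≥ 7` points,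
contradicting `|u| = 6`.
-/

namespace Finset

variable {α : Type*} [DecidableEq α]

theorem inter_eq_of_subset_of_card_inter_le {a b t : Finset α} (hta : t ⊆ a) (htb : t ⊆ b)
    (hcard : (a ∩ b).card ≤ t.card) : a ∩ b = t :=
  (eq_of_subset_of_card_le (subset_inter hta htb) hcard).symm

theorem card_inter_sdiff_add_card_inter {t w : Finset α} (htw : t ⊆ w) (u : Finset α) :
    (u ∩ (w \ t)).card + (u ∩ t).card = (u ∩ w).card := by
  rw [← card_sdiff_add_card_eq_card (inter_subset_inter_left htw)]
  exact congrArg (#· + _) (inf_sdiff_distrib_left u w t)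

theorem card_inter_add_sum_card_inter_sdiff_le {S : Finset (Finset α)} {t : Finset α}
    (hS : (S : Set (Finset α)).Pairwise fun a b => a ∩ b ⊆ t) (u : Finset α) :
    (u ∩ t).card + ∑ w ∈ S, (u ∩ (w \ t)).card ≤ u.card := by
  have hdisj : (S : Set (Finset α)).PairwiseDisjoint fun w => u ∩ (w \ t) := by
    intro a ha b hb hab
    refine disjoint_left.mpr fun x hxa hxb => ?_
    simp only [mem_inter, mem_sdiff] at hxa hxb
    exact hxa.2.2 (hS ha hb hab (mem_inter.mpr ⟨hxa.2.1, hxb.2.1⟩))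
  have ht : Disjoint (u ∩ t) (S.biUnion fun w => u ∩ (w \ t)) := by
    refine disjoint_left.mpr fun x hx hxS => ?_
    simp only [mem_biUnion, mem_inter, mem_sdiff] at hx hxS
    obtain ⟨_, _, _, _, hxt⟩ := hxS
    exact hxt hx.2
  rw [← card_biUnion hdisj, ← card_union_of_disjoint ht]
  refine card_le_card fun x hx => ?_
  simp only [mem_union, mem_biUnion, mem_inter] at hx
  obtain hx | ⟨_, _, hx, _⟩ := hx
  exacts [hx.1, hx]

end Finset

open Finset

theorem stmt_0_general {α : Type*} [DecidableEq α] (C : Finset (Finset α))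
    (hcard : ∀ w ∈ C, w.card = 6)
    (hint : ∀ u ∈ C, ∀ w ∈ C, u ≠ w → (u ∩ w).card = 3)
    (t : Finset α) (htc : t.card = 3)
    (u : Finset α) (hu : u ∈ C) (hut : (u ∩ t).card ≤ 1) :
    (C.filter (fun w => t ⊆ w)).card ≤ 2 := by
  set S := C.filter (fun w => t ⊆ w)
  have hS : (S : Set (Finset α)).Pairwise fun a b => a ∩ b ⊆ t := by
    intro a ha b hb hab
    simp only [S, coe_filter, Set.mem_ofPred_eq] at ha hb
    exact (inter_eq_of_subset_of_card_inter_le ha.2 hb.2 (hint a ha.1 b hb.1 hab ▸ htc.ge)).le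
  have hpetal : ∀ w ∈ S, 3 - (u ∩ t).card ≤ (u ∩ (w \ t)).card := by
    intro w hw
    obtain ⟨hwC, htw⟩ := mem_filter.mp hw
    have huw : u ≠ w := by
      rintro rfl
      rw [inter_eq_right.mpr htw] at hut
      omega
    have hsplit := card_inter_sdiff_add_card_inter htw u
    have hmeet := hint u hu w hwC huw
    omega
  have hsum := card_nsmul_le_sum S _ _ hpetal
  have hbound := card_inter_add_sum_card_inter_sdiff_le hS u
  rw [smul_eq_mul] at hsum
  rw [hcard u hu] at hbound
  by_contra! hS3
  have hmul := Nat.mul_le_mul_right (3 - (u ∩ t).card) hS3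
  omega

theorem stmt_0 {α : Type*} [DecidableEq α] (C : Finset (Finset α))
    (hcard : ∀ w ∈ C, w.card = 6)
    (hint : ∀ u ∈ C, ∀ w ∈ C, u ≠ w → (u ∩ w).card = 3)
    (v : Finset α) (hv : v ∈ C) (t : Finset α) (ht : t ⊆ v) (htc : t.card = 3)
    (u : Finset α) (hu : u ∈ C) (hut : (u ∩ t).card ≤ 1) :
    (C.filter (fun w => t ⊆ w)).card ≤ 2 :=
  stmt_0_general C hcard hint t htc u hu hut
end

section
/- Let C be a family of 6-element subsets of a finite set such that any two distinct members of C intersect in exactly 3 elements. Let v = {v1,...,v6} ∈ C. If there is some u ∈ C with |u ∩ {v1,v2,v3}| = 2, then at most 4 members of C contain {v1,v2,v3}. -/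
/-!
Every member `w ⊇ t` of the clique other than `u` meets `u` in three points, only two of which lie
in `t`, so `w` picks up a point of `u \ t`. Two distinct such members meet exactly in `t`, so the
points they pick up are distinct; hence there are at most `|u \ t| = 6 - 2 = 4` of them.
-/

open Finset

section

variable {α : Type*} [DecidableEq α]

/-- The sets `(w ∩ s) \ t`, `w ∈ F`, are pairwise disjoint nonempty subsets of `s \ t`. -/
theorem card_le_card_sdiff_of_pairwise_inter_subset {F : Finset (Finset α)} {s t : Finset α}
    (hF : ∀ w ∈ F, ∀ w' ∈ F, w ≠ w' → w ∩ w' ⊆ t)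
    (hs : ∀ w ∈ F, ((w ∩ s) \ t).Nonempty) :
    #F ≤ #(s \ t) := by
  have hdisj : (F : Set (Finset α)).PairwiseDisjoint fun w => (w ∩ s) \ t := by
    intro w hw w' hw' hne
    refine disjoint_left.2 fun a ha ha' => (mem_sdiff.1 ha).2 (hF w hw w' hw' hne ?_)
    simp only [mem_sdiff, mem_inter] at ha ha' ⊢
    exact ⟨ha.1.1, ha'.1.1⟩
  calc #F ≤ #(F.biUnion fun w => (w ∩ s) \ t) := card_le_card_biUnion hdisj hs
    _ ≤ #(s \ t) := card_le_card <| biUnion_subset.2 fun _ _ =>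
      sdiff_subset_sdiff inter_subset_right subset_rfl

theorem inter_sdiff_nonempty_of_card_lt {w u t : Finset α} (h : #(u ∩ t) < #(w ∩ u)) :
    ((w ∩ u) \ t).Nonempty := by
  rw [nonempty_iff_ne_empty, Ne, sdiff_eq_empty_iff_subset]
  intro hsub
  exact (card_le_card (subset_inter inter_subset_right hsub)).not_gt h

end

theorem stmt_1_general {α : Type*} [DecidableEq α] (C : Finset (Finset α))
    (hcard : ∀ w ∈ C, w.card = 6)
    (hint : ∀ u ∈ C, ∀ w ∈ C, u ≠ w → (u ∩ w).card = 3)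
    (t : Finset α) (htc : t.card = 3)
    (u : Finset α) (hu : u ∈ C) (hut : (u ∩ t).card = 2) :
    (C.filter (fun w => t ⊆ w)).card ≤ 4 := by
  have hpair : ∀ w ∈ C.filter (t ⊆ ·), ∀ w' ∈ C.filter (t ⊆ ·), w ≠ w' → w ∩ w' ⊆ t := by
    intro w hw w' hw' hne
    rw [mem_filter] at hw hw'
    exact (eq_of_subset_of_card_le (subset_inter hw.2 hw'.2)
      (by rw [hint w hw.1 w' hw'.1 hne, htc])).ge
  have hmeet : ∀ w ∈ C.filter (t ⊆ ·), ((w ∩ u) \ t).Nonempty := by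
    intro w hw
    rw [mem_filter] at hw
    have hwu : w ≠ u := by
      rintro rfl
      rw [inter_eq_right.2 hw.2] at hut
      omega
    exact inter_sdiff_nonempty_of_card_lt (by rw [hut, hint w hw.1 u hu hwu]; omega)
  have hsize := card_sdiff_add_card_inter u t
  rw [hut, hcard u hu] at hsize
  have := card_le_card_sdiff_of_pairwise_inter_subset hpair hmeet
  omega

theorem stmt_1 {α : Type*} [DecidableEq α] (C : Finset (Finset α))
    (hcard : ∀ w ∈ C, w.card = 6)
    (hint : ∀ u ∈ C, ∀ w ∈ C, u ≠ w → (u ∩ w).card = 3)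
    (v : Finset α) (hv : v ∈ C) (t : Finset α) (ht : t ⊆ v) (htc : t.card = 3)
    (u : Finset α) (hu : u ∈ C) (hut : (u ∩ t).card = 2) :
    (C.filter (fun w => t ⊆ w)).card ≤ 4 :=
  stmt_1_general C hcard hint t htc u hu hut
end

section
/- Let C be a family of 6-element subsets of a finite set, pairwise intersecting in exactly 3 elements, and suppose some fixed member v ∈ C contains two disjoint triples t1, t2 each of which is the intersection v ∩ u for some other u ∈ C. Then |C| ≤ 3. -/
/-!
Write `t₁ = v ∩ u₁`, `t₂ = v ∩ u₂` and `s = u₁ \ v`. Counting forces `v = t₁ ∪ t₂`, `u₁ = t₁ ∪ s`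
and `u₂ = t₂ ∪ s` with `t₁, t₂, s` pairwise disjoint. Any set `w` then meets `v`, `u₁`, `u₂` in
`a + b`, `a + c`, `b + c` elements, where `a, b, c` count its points in `t₁, t₂, s`; the sum is even,
so no fourth member of the clique can meet each of them in exactly three elements.
-/

namespace Finset

variable {α : Type*} [DecidableEq α]

theorem card_inter_union_of_disjoint {a b : Finset α} (hab : Disjoint a b) (w : Finset α) :
    #(w ∩ (a ∪ b)) = #(w ∩ a) + #(w ∩ b) := by
  rw [inter_union_distrib_left,
    card_union_of_disjoint (hab.mono inter_subset_right inter_subset_right)]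

theorem card_inter_union_add_card_inter_union_add_card_inter_union {a b c : Finset α}
    (hab : Disjoint a b) (hac : Disjoint a c) (hbc : Disjoint b c) (w : Finset α) :
    #(w ∩ (a ∪ b)) + #(w ∩ (a ∪ c)) + #(w ∩ (b ∪ c)) = 2 * (#(w ∩ a) + #(w ∩ b) + #(w ∩ c)) := by
  rw [card_inter_union_of_disjoint hab, card_inter_union_of_disjoint hac,
    card_inter_union_of_disjoint hbc]
  ring

theorem inter_subset_sdiff_of_disjoint_inter {u₁ u₂ v : Finset α}
    (hdisj : Disjoint (v ∩ u₁) (v ∩ u₂)) : u₁ ∩ u₂ ⊆ u₁ \ v := fun x hx ↦ by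
  rw [mem_inter] at hx
  exact mem_sdiff.2 ⟨hx.1, fun hxv ↦
    disjoint_left.1 hdisj (mem_inter.2 ⟨hxv, hx.1⟩) (mem_inter.2 ⟨hxv, hx.2⟩)⟩

theorem even_card_inter_add_card_inter_add_card_inter {n : ℕ} {v u₁ u₂ : Finset α}
    (hv : #v = 2 * n) (hu₁ : #u₁ = 2 * n) (hu₂ : #u₂ = 2 * n)
    (hvu₁ : #(v ∩ u₁) = n) (hvu₂ : #(v ∩ u₂) = n) (hu₁u₂ : #(u₁ ∩ u₂) = n)
    (hdisj : Disjoint (v ∩ u₁) (v ∩ u₂)) (w : Finset α) :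
    Even (#(w ∩ v) + #(w ∩ u₁) + #(w ∩ u₂)) := by
  have hv_eq : v ∩ u₁ ∪ v ∩ u₂ = v :=
    eq_of_subset_of_card_le (union_subset inter_subset_left inter_subset_left)
      (by rw [card_union_of_disjoint hdisj]; omega)
  have hsdiff_card : ∀ u, #u = 2 * n → #(v ∩ u) = n → #(u \ v) = n := fun u hu hvu ↦ by
    have := card_inter_add_card_sdiff u v
    rw [inter_comm] at this
    omega
  have hs₁ : u₁ ∩ u₂ = u₁ \ v :=
    eq_of_subset_of_card_le (inter_subset_sdiff_of_disjoint_inter hdisj)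
      (by rw [hsdiff_card u₁ hu₁ hvu₁, hu₁u₂])
  have hs₂ : u₁ ∩ u₂ = u₂ \ v :=
    eq_of_subset_of_card_le (inter_comm u₂ u₁ ▸ inter_subset_sdiff_of_disjoint_inter hdisj.symm)
      (by rw [hsdiff_card u₂ hu₂ hvu₂, hu₁u₂])
  have hu_eq : ∀ u, v ∩ u ∪ u \ v = u := fun u ↦ by rw [inter_comm]; exact sup_inf_sdiff u v
  have hdisj_sdiff : ∀ u u', Disjoint (v ∩ u) (u' \ v) := fun u u' ↦
    (sdiff_disjoint (t := u') (s := v)).symm.mono_left inter_subset_left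
  have htriangle := card_inter_union_add_card_inter_union_add_card_inter_union hdisj
    (hs₁ ▸ hdisj_sdiff u₁ u₁) (hs₁ ▸ hdisj_sdiff u₂ u₁) w
  rw [hv_eq, hs₁, hu_eq, ← hs₁, hs₂, hu_eq] at htriangle
  rw [htriangle]
  exact even_two_mul _

end Finset

open Finset

theorem stmt_3 {α : Type*} [DecidableEq α] (C : Finset (Finset α))
    (hcard : ∀ w ∈ C, w.card = 6)
    (hint : ∀ u ∈ C, ∀ w ∈ C, u ≠ w → (u ∩ w).card = 3)
    (v : Finset α) (hv : v ∈ C)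
    (t1 t2 u1 u2 : Finset α) (hu1 : u1 ∈ C) (hu2 : u2 ∈ C)
    (hu1v : u1 ≠ v) (hu2v : u2 ≠ v)
    (ht1 : t1 = v ∩ u1) (ht2 : t2 = v ∩ u2)
    (hdisj : Disjoint t1 t2) :
    C.card ≤ 3 := by
  subst ht1 ht2
  have hvu₁ := hint v hv u1 hu1 hu1v.symm
  have hvu₂ := hint v hv u2 hu2 hu2v.symm
  have hu₁u₂ : u1 ≠ u2 := by
    rintro rfl
    rw [(disjoint_self_iff_empty _).1 hdisj, card_empty] at hvu₁
    omega
  have hsub : C ⊆ {v, u1, u2} := fun w hw ↦ by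
    by_contra hw'
    simp only [mem_insert, mem_singleton, not_or] at hw'
    obtain ⟨hwv, hwu₁, hwu₂⟩ := hw'
    have hparity := even_card_inter_add_card_inter_add_card_inter (n := 3) (hcard v hv) (hcard u1 hu1)
      (hcard u2 hu2) hvu₁ hvu₂ (hint u1 hu1 u2 hu2 hu₁u₂) hdisj w
    rw [hint w hw v hv hwv, hint w hw u1 hu1 hwu₁, hint w hw u2 hu2 hwu₂] at hparity
    exact absurd hparity (by decide)
  exact (card_le_card hsub).trans card_le_three
end

section
/- Let P be a family of subsets of {1,...,n} (supports of codewords of a minimum-distance-6 code) such that any two distinct members have symmetric difference of size at least 6. Let t1, t2 be 3-element subsets of {1,...,n}, and let v be a 6-element member of P containing t1. If |v ∩ t2| = 1, then at most two 6-element members u of P contain t2 and satisfy |u ∩ v| = 3. -/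
/-!
Every admissible `u` contains `t2` and meets `v` in three points, one of which is the single
point of `v ∩ t2`; so `u` picks out a pair `(u ∩ v) \ t2` inside the 5-set `v \ t2`. Two
distinct 6-sets at distance at least 6 share at most three points, so two admissible sets meet
exactly in `t2` and their pairs are disjoint. Three disjoint pairs do not fit into five points.
-/

open Finset

variable {α : Type*} [DecidableEq α]

theorem Finset.card_symmDiff_add_two_mul_card_inter (x y : Finset α) :
    #(symmDiff x y) + 2 * #(x ∩ y) = #x + #y := by
  have hx := card_sdiff_add_card_inter x y
  have hy := card_sdiff_add_card_inter y x
  rw [Finset.symmDiff_def, card_union_of_disjoint disjoint_sdiff_sdiff, inter_comm y x] at *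
  omega

theorem Finset.inter_eq_of_subset_of_card_add_card_le {x y t : Finset α} (ht : t ⊆ x ∩ y)
    (hcard : #x + #y ≤ #(symmDiff x y) + 2 * #t) : x ∩ y = t := by
  have := card_symmDiff_add_two_mul_card_inter x y
  exact (eq_of_subset_of_card_le ht (by omega)).symm

theorem Finset.card_mul_le_of_pairwiseDisjoint {ι : Type*} {F : Finset ι} {f : ι → Finset α}
    {s : Finset α} {k : ℕ} (hdisj : (F : Set ι).PairwiseDisjoint f) (hsub : ∀ i ∈ F, f i ⊆ s)
    (hcard : ∀ i ∈ F, #(f i) = k) : #F * k ≤ #s :=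
  calc #F * k = #(F.biUnion f) := by rw [card_biUnion hdisj, sum_const_nat hcard]
    _ ≤ #s := card_le_card (biUnion_subset.mpr hsub)

theorem stmt_6_general {n : ℕ} (P : Finset (Finset (Fin n)))
    (hdist : ∀ u ∈ P, ∀ v ∈ P, u ≠ v → 6 ≤ (symmDiff u v).card)
    (t2 : Finset (Fin n)) (ht2 : t2.card = 3)
    (v : Finset (Fin n)) (hv6 : v.card = 6)
    (hvt2 : (v ∩ t2).card = 1) :
    (P.filter (fun u => u.card = 6 ∧ t2 ⊆ u ∧ (u ∩ v).card = 3)).card ≤ 2 := by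
  set F := P.filter (fun u => u.card = 6 ∧ t2 ⊆ u ∧ (u ∩ v).card = 3)
  have hpair_card : ∀ u ∈ F, #((u ∩ v) \ t2) = 2 := by
    intro u hu
    obtain ⟨-, -, ht2u, huv⟩ := mem_filter.mp hu
    have : t2 ∩ (u ∩ v) = v ∩ t2 := by
      rw [inter_comm v, ← inter_assoc, inter_eq_left.mpr ht2u]
    rw [card_sdiff, this, huv, hvt2]
  have hpair_disj : (F : Set (Finset (Fin n))).PairwiseDisjoint (fun u => (u ∩ v) \ t2) := by
    intro u hu w hw huw
    obtain ⟨huP, hu6, ht2u, -⟩ := mem_filter.mp hu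
    obtain ⟨hwP, hw6, ht2w, -⟩ := mem_filter.mp hw
    have huw_eq : u ∩ w = t2 := inter_eq_of_subset_of_card_add_card_le (subset_inter ht2u ht2w)
      (by have := hdist u huP w hwP huw; omega)
    rw [Function.onFun, disjoint_left]
    intro z hzu hzw
    simp only [mem_sdiff, mem_inter] at hzu hzw
    exact hzu.2 (huw_eq ▸ mem_inter.mpr ⟨hzu.1.1, hzw.1.1⟩)
  have hvt2_card : #(v \ t2) = 5 := by rw [card_sdiff, inter_comm, hvt2, hv6]
  have := card_mul_le_of_pairwiseDisjoint hpair_disj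
    (fun u _ => sdiff_subset_sdiff inter_subset_right subset_rfl) hpair_card
  omega

theorem stmt_6 {n : ℕ} (P : Finset (Finset (Fin n)))
    (hdist : ∀ u ∈ P, ∀ v ∈ P, u ≠ v → 6 ≤ (symmDiff u v).card)
    (t1 t2 : Finset (Fin n)) (ht1 : t1.card = 3) (ht2 : t2.card = 3)
    (v : Finset (Fin n)) (hv : v ∈ P) (hv6 : v.card = 6) (ht1v : t1 ⊆ v)
    (hvt2 : (v ∩ t2).card = 1) :
    (P.filter (fun u => u.card = 6 ∧ t2 ⊆ u ∧ (u ∩ v).card = 3)).card ≤ 2 :=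
  stmt_6_general P hdist t2 ht2 v hv6 hvt2
end

section
/- Let n ≥ 16 and let P be a family of 6-element subsets of {1,...,n} pairwise intersecting in at most 3 elements, such that for every 3-subset t of {1,...,n}, every 4-subset containing t is contained in at most one member of P, and the members containing t partition the remaining points except one (so |C(t)| = (n-4)/3 where C(t) = {v ∈ P : t ⊆ v}). If t1, t2 are triples with |t1 ∩ t2| = 1 and C(t1), C(t2) have no common member, then there exists a member of one clique having at most two neighbors (members intersecting it in exactly 3 points) in the other clique. -/
theorem stmt_8 {n : ℕ} (hn : 16 ≤ n) (P : Finset (Finset (Fin n)))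
    (hcard : ∀ v ∈ P, v.card = 6)
    (hint : ∀ u ∈ P, ∀ v ∈ P, u ≠ v → (u ∩ v).card ≤ 3)
    (h4 : ∀ b : Finset (Fin n), b.card = 4 → (P.filter (fun v => b ⊆ v)).card ≤ 1)
    (hCt : ∀ t : Finset (Fin n), t.card = 3 →
      (P.filter (fun v => t ⊆ v)).card = (n - 4) / 3)
    (t1 t2 : Finset (Fin n)) (ht1 : t1.card = 3) (ht2 : t2.card = 3)
    (hmeet : (t1 ∩ t2).card = 1)
    (hnocommon : ¬ ∃ w ∈ P, t1 ⊆ w ∧ t2 ⊆ w) :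
    ∃ v ∈ P,
      (t1 ⊆ v ∧ (P.filter (fun u => t2 ⊆ u ∧ (u ∩ v).card = 3)).card ≤ 2) ∨
      (t2 ⊆ v ∧ (P.filter (fun u => t1 ⊆ u ∧ (u ∩ v).card = 3)).card ≤ 2) := by
  classical
  set A := P.filter (fun v => t1 ⊆ v) with hA
  have hAcard : 4 ≤ A.card := by
    rw [hA, hCt t1 ht1]
    rw [Nat.le_div_iff_mul_le (by norm_num)]
    omega
  -- bad members of A: those meeting t2 \ t1
  set B := A.filter (fun v => ∃ y ∈ t2 \ t1, y ∈ v) with hB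
  have hBsub : B ⊆ (t2 \ t1).biUnion (fun y => A.filter (fun v => y ∈ v)) := by
    intro v hv
    rw [hB, Finset.mem_filter] at hv
    obtain ⟨hvA, y, hy, hyv⟩ := hv
    exact Finset.mem_biUnion.2 ⟨y, hy, Finset.mem_filter.2 ⟨hvA, hyv⟩⟩
  have hBcard : B.card ≤ 2 := by
    have h1 : ∀ y ∈ t2 \ t1, (A.filter (fun v => y ∈ v)).card ≤ 1 := by
      intro y hy
      have hy' := Finset.mem_sdiff.1 hy
      have hbcard : (insert y t1).card = 4 := by
        rw [Finset.card_insert_of_notMem hy'.2, ht1]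
      refine le_trans (Finset.card_le_card ?_) (h4 _ hbcard)
      intro v hv
      rw [Finset.mem_filter] at hv
      rw [hA, Finset.mem_filter] at hv
      exact Finset.mem_filter.2 ⟨hv.1.1, Finset.insert_subset hv.2 hv.1.2⟩
    have h2 : (t2 \ t1).card = 2 := by
      have := Finset.card_sdiff_add_card_inter t2 t1
      rw [Finset.inter_comm] at this
      omega
    calc B.card ≤ ((t2 \ t1).biUnion (fun y => A.filter (fun v => y ∈ v))).card :=
          Finset.card_le_card hBsub
      _ ≤ ∑ y ∈ t2 \ t1, (A.filter (fun v => y ∈ v)).card := Finset.card_biUnion_le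
      _ ≤ ∑ y ∈ t2 \ t1, 1 := Finset.sum_le_sum h1
      _ = 2 := by rw [Finset.sum_const, smul_eq_mul, h2]
  -- pick v ∈ A \ B
  have hABne : (A \ B).Nonempty := by
    rw [Finset.sdiff_nonempty]
    intro h
    have := Finset.card_le_card h
    omega
  obtain ⟨v, hv⟩ := hABne
  rw [Finset.mem_sdiff] at hv
  have hvA := hv.1
  have hvP : v ∈ P := (Finset.mem_filter.1 hvA).1
  have ht1v : t1 ⊆ v := (Finset.mem_filter.1 hvA).2
  have hvB : ∀ y ∈ t2 \ t1, y ∉ v := by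
    intro y hy hyv
    exact hv.2 (Finset.mem_filter.2 ⟨hvA, y, hy, hyv⟩)
  have hv6 : v.card = 6 := hcard v hvP
  -- t2 ∩ v = t1 ∩ t2
  have hiv : t2 ∩ v = t1 ∩ t2 := by
    ext z
    simp only [Finset.mem_inter]
    constructor
    · rintro ⟨hz2, hzv⟩
      refine ⟨?_, hz2⟩
      by_contra hz1
      exact hvB z (Finset.mem_sdiff.2 ⟨hz2, hz1⟩) hzv
    · rintro ⟨hz1, hz2⟩
      exact ⟨hz2, ht1v hz1⟩
  have hivcard : (t2 ∩ v).card = 1 := by rw [hiv]; exact hmeet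
  -- now bound the neighbors
  refine ⟨v, hvP, Or.inl ⟨ht1v, ?_⟩⟩
  set N := P.filter (fun u => t2 ⊆ u ∧ (u ∩ v).card = 3) with hN
  set e : Finset (Fin n) → Finset (Fin n) := fun u => (u ∩ v) \ t2 with he
  have hecard : ∀ u ∈ N, (e u).card = 2 := by
    intro u hu
    rw [hN, Finset.mem_filter] at hu
    obtain ⟨huP, ht2u, huv3⟩ := hu
    have hinter : (u ∩ v) ∩ t2 = t2 ∩ v := by
      ext z
      simp only [Finset.mem_inter]
      constructor
      · rintro ⟨⟨_, hzv⟩, hz2⟩; exact ⟨hz2, hzv⟩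
      · rintro ⟨hz2, hzv⟩; exact ⟨⟨ht2u hz2, hzv⟩, hz2⟩
    have : (e u).card = (u ∩ v).card - ((u ∩ v) ∩ t2).card := by
      rw [he]
      simp only
      rw [← Finset.sdiff_inter_self_left, Finset.card_sdiff_of_subset Finset.inter_subset_left]
    rw [this, hinter, hivcard, huv3]
  have hesub : ∀ u ∈ N, e u ⊆ v \ t2 := by
    intro u _ z hz
    rw [he, Finset.mem_sdiff, Finset.mem_inter] at hz
    exact Finset.mem_sdiff.2 ⟨hz.1.2, hz.2⟩
  have hdisj : ∀ u ∈ N, ∀ u' ∈ N, u ≠ u' → Disjoint (e u) (e u') := by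
    intro u hu u' hu' hne
    rw [Finset.disjoint_left]
    intro p hp hp'
    rw [he, Finset.mem_sdiff, Finset.mem_inter] at hp hp'
    rw [hN, Finset.mem_filter] at hu hu'
    have hp2 : p ∉ t2 := hp.2
    have hbcard : (insert p t2).card = 4 := by
      rw [Finset.card_insert_of_notMem hp2, ht2]
    have hsub : ({u, u'} : Finset (Finset (Fin n))) ⊆
        P.filter (fun w => insert p t2 ⊆ w) := by
      intro w hw
      rw [Finset.mem_insert, Finset.mem_singleton] at hw
      rcases hw with rfl | rfl
      · exact Finset.mem_filter.2 ⟨hu.1, Finset.insert_subset hp.1.1 hu.2.1⟩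
      · exact Finset.mem_filter.2 ⟨hu'.1, Finset.insert_subset hp'.1.1 hu'.2.1⟩
    have : ({u, u'} : Finset (Finset (Fin n))).card = 2 :=
      Finset.card_pair hne
    have := Finset.card_le_card hsub
    have := h4 (insert p t2) hbcard
    omega
  have hbiU : (N.biUnion e).card = 2 * N.card := by
    rw [Finset.card_biUnion hdisj]
    rw [Finset.sum_congr rfl hecard, Finset.sum_const, smul_eq_mul]
    ring
  have hvsdcard : (v \ t2).card = 5 := by
    rw [← Finset.sdiff_inter_self_left, Finset.card_sdiff_of_subset Finset.inter_subset_left,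
      Finset.inter_comm, hivcard, hv6]
  have hle : (N.biUnion e).card ≤ 5 := by
    rw [← hvsdcard]
    exact Finset.card_le_card (Finset.biUnion_subset.2 hesub)
  omega
end

section
/- Let Q be a Steiner quadruple system on {1,...,n} and let P be a family of 6-element subsets of {1,...,n} pairwise intersecting in at most 3 elements such that every 4-subset of {1,...,n} is either a block of Q (and contained in no member of P) or contained in exactly one member of P. Let b = t1 ∪ t2 be a block of Q written as the union of triples t1, t2 with |t1 ∩ t2| = 2. Then C(t1) and C(t2) are disjoint, and every member of C(t1) intersects exactly 3 members of C(t2) in exactly 3 points (and vice versa). -/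
open Finset

/-- Two members of `P` containing a common 4-set are equal. -/
lemma sqs_mem_unique4 {n : ℕ} {P : Finset (Finset (Fin n))}
    (hPint : ∀ u ∈ P, ∀ v ∈ P, u ≠ v → (u ∩ v).card ≤ 3)
    {s z1 z2 : Finset (Fin n)} (hs : s.card = 4)
    (h1 : z1 ∈ P) (h2 : z2 ∈ P) (hs1 : s ⊆ z1) (hs2 : s ⊆ z2) : z1 = z2 := by
  by_contra hne
  have hle := hPint z1 h1 z2 h2 hne
  have : (4 : ℕ) ≤ 3 := by
    calc (4 : ℕ) = s.card := hs.symm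
    _ ≤ (z1 ∩ z2).card := card_le_card (subset_inter hs1 hs2)
    _ ≤ 3 := hle
  omega

/-- Part 1: no member of `P` contains both triples. -/
lemma sqs_part1 {n : ℕ} (Q P : Finset (Finset (Fin n)))
    (hQ4 : ∀ b ∈ Q, b.card = 4)
    (hSQS : ∀ t : Finset (Fin n), t.card = 3 → ∃! b, b ∈ Q ∧ t ⊆ b)
    (hP6 : ∀ v ∈ P, v.card = 6)
    (hPint : ∀ u ∈ P, ∀ v ∈ P, u ≠ v → (u ∩ v).card ≤ 3)
    (hfour : ∀ b : Finset (Fin n), b.card = 4 →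
      Xor' (b ∈ Q ∧ ∀ v ∈ P, ¬ b ⊆ v) (∃! v, v ∈ P ∧ b ⊆ v))
    (t1 t2 b : Finset (Fin n)) (hb : b ∈ Q) (hbeq : b = t1 ∪ t2)
    (ht1 : t1.card = 3) (ht2 : t2.card = 3) (hmeet : (t1 ∩ t2).card = 2) :
    ∀ u ∈ P, ¬ (t1 ⊆ u ∧ t2 ⊆ u) := by
  classical
  rintro u hu ⟨hu1, hu2⟩
  have hbu : b ⊆ u := hbeq ▸ union_subset hu1 hu2
  have ht1b : t1 ⊆ b := hbeq ▸ subset_union_left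
  have hn6 : 6 ≤ n := by
    have h := card_le_univ u
    rwa [hP6 u hu, Fintype.card_fin] at h
  -- every 4-set `insert w t1` lies in a unique member of `P`
  have exu : ∀ w : Fin n, w ∉ t1 → ∃! z, z ∈ P ∧ insert w t1 ⊆ z := by
    intro w hw
    have hcard : (insert w t1).card = 4 := by
      rw [card_insert_of_notMem hw, ht1]
    by_cases hQmem : insert w t1 ∈ Q
    · have heqb : insert w t1 = b :=
        (hSQS t1 ht1).unique ⟨hQmem, subset_insert _ _⟩ ⟨hb, ht1b⟩
      refine ⟨u, ⟨hu, heqb ▸ hbu⟩, ?_⟩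
      rintro z ⟨hz, hsz⟩
      exact sqs_mem_unique4 hPint hcard hz hu hsz (heqb ▸ hbu)
    · rcases hfour (insert w t1) hcard with ⟨⟨hA1, _⟩, _⟩ | ⟨hB, _⟩
      · exact absurd hA1 hQmem
      · exact hB
  -- fiberwise counting over members containing t1
  set C := P.filter (fun z => t1 ⊆ z) with hC
  set g : Fin n → Finset (Fin n) := fun w =>
    if h : ∃! z, z ∈ P ∧ insert w t1 ⊆ z then Finset.choose _ P h else ∅ with hg
  have hgspec : ∀ w : Fin n, w ∉ t1 → g w ∈ P ∧ insert w t1 ⊆ g w := by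
    intro w hw
    have h := exu w hw
    simp only [hg, dif_pos h]
    exact ⟨Finset.choose_mem _ P h, Finset.choose_property _ P h⟩
  have hmap : ∀ w ∈ (univ : Finset (Fin n)) \ t1, g w ∈ C := by
    intro w hw
    have hw' : w ∉ t1 := (mem_sdiff.mp hw).2
    obtain ⟨h1, h2⟩ := hgspec w hw'
    exact mem_filter.mpr ⟨h1, (subset_insert w t1).trans h2⟩
  have hcount := card_eq_sum_card_fiberwise hmap
  have hfib : ∀ z ∈ C, ((univ \ t1).filter (fun w => g w = z)).card = 3 := by
    intro z hz
    obtain ⟨hzP, hzt1⟩ := mem_filter.mp hz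
    have hset : (univ \ t1).filter (fun w => g w = z) = z \ t1 := by
      ext w
      simp only [mem_filter, mem_sdiff, mem_univ, true_and]
      constructor
      · rintro ⟨hwt1, hgw⟩
        obtain ⟨_, hsub⟩ := hgspec w hwt1
        exact ⟨hgw ▸ hsub (mem_insert_self w t1), hwt1⟩
      · rintro ⟨hwz, hwt1⟩
        refine ⟨hwt1, ?_⟩
        obtain ⟨h1, h2⟩ := hgspec w hwt1
        exact (exu w hwt1).unique ⟨h1, h2⟩ ⟨hzP, insert_subset hwz hzt1⟩
    rw [hset, card_sdiff_of_subset hzt1, hP6 z hzP, ht1]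
  have hsum : ((univ : Finset (Fin n)) \ t1).card = 3 * C.card := by
    rw [hcount, Finset.sum_congr rfl hfib, Finset.sum_const, smul_eq_mul, mul_comm]
  have hcards : ((univ : Finset (Fin n)) \ t1).card = n - 3 := by
    rw [card_sdiff_of_subset (subset_univ t1), card_univ, Fintype.card_fin, ht1]
  have hdvd3 : (3 : ℕ) ∣ n - 3 := ⟨C.card, by omega⟩
  -- second count: blocks through a point x; 3 ∣ (n-1).choose 2
  have hne1 : t1.Nonempty := card_pos.mp (by omega)
  obtain ⟨x, hx⟩ := hne1
  set Dom := ((univ : Finset (Fin n)).erase x).powersetCard 2 with hDom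
  have exB : ∀ p ∈ Dom, ∃! B, B ∈ Q ∧ insert x p ⊆ B := by
    intro p hp
    obtain ⟨hpsub, hpcard⟩ := mem_powersetCard.mp hp
    have hxp : x ∉ p := fun h => (mem_erase.mp (hpsub h)).1 rfl
    have : (insert x p).card = 3 := by rw [card_insert_of_notMem hxp, hpcard]
    exact hSQS _ this
  set h : Finset (Fin n) → Finset (Fin n) := fun p =>
    if hp : ∃! B, B ∈ Q ∧ insert x p ⊆ B then Finset.choose _ Q hp else ∅ with hh
  have hhspec : ∀ p ∈ Dom, h p ∈ Q ∧ insert x p ⊆ h p := by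
    intro p hp
    have hex := exB p hp
    simp only [hh, dif_pos hex]
    exact ⟨Finset.choose_mem _ Q hex, Finset.choose_property _ Q hex⟩
  have hmap2 : ∀ p ∈ Dom, h p ∈ Q := fun p hp => (hhspec p hp).1
  have hcount2 := card_eq_sum_card_fiberwise hmap2
  have hfib2 : ∀ B ∈ Q, (3 : ℕ) ∣ (Dom.filter (fun p => h p = B)).card := by
    intro B hBQ
    by_cases hxB : x ∈ B
    · have hset : Dom.filter (fun p => h p = B) = (B.erase x).powersetCard 2 := by
        ext p
        simp only [mem_filter, mem_powersetCard]
        constructor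
        · rintro ⟨hp, hhp⟩
          obtain ⟨hpsub, hpcard⟩ := mem_powersetCard.mp hp
          have hxp : x ∉ p := fun hmem => (mem_erase.mp (hpsub hmem)).1 rfl
          obtain ⟨_, hsub⟩ := hhspec p hp
          refine ⟨subset_erase.mpr ⟨?_, hxp⟩, hpcard⟩
          exact (subset_insert x p).trans (hhp ▸ hsub)
        · rintro ⟨hpsub, hpcard⟩
          obtain ⟨hpB, hxp⟩ := subset_erase.mp hpsub
          have hpDom : p ∈ Dom := mem_powersetCard.mpr
            ⟨subset_erase.mpr ⟨subset_univ p, hxp⟩, hpcard⟩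
          refine ⟨hpDom, ?_⟩
          obtain ⟨h1, h2⟩ := hhspec p hpDom
          exact (exB p hpDom).unique ⟨h1, h2⟩ ⟨hBQ, insert_subset hxB hpB⟩
      rw [hset, card_powersetCard, card_erase_of_mem hxB, hQ4 B hBQ]
      norm_num
    · have hset : Dom.filter (fun p => h p = B) = ∅ := by
        rw [filter_eq_empty_iff]
        intro p hp hhp
        obtain ⟨_, hsub⟩ := hhspec p hp
        exact hxB (hhp ▸ hsub (mem_insert_self x p))
      rw [hset]
      simp
  have hdvdDom : (3 : ℕ) ∣ Dom.card := by
    rw [hcount2]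
    exact Finset.dvd_sum hfib2
  have hDomcard : Dom.card = (n - 1).choose 2 := by
    rw [hDom, card_powersetCard, card_erase_of_mem (mem_univ x), card_univ, Fintype.card_fin]
  -- now derive the contradiction
  rw [hDomcard] at hdvdDom
  have hch : (n - 1).choose 2 * 2 = (n - 1) * (n - 2) := by
    have heven : 2 ∣ (n - 1) * (n - 2) := by
      have := Nat.even_mul_succ_self (n - 2)
      have h2 : n - 2 + 1 = n - 1 := by omega
      rw [h2, mul_comm] at this
      exact this.two_dvd
    rw [Nat.choose_two_right]
    have : n - 1 - 1 = n - 2 := by omega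
    rw [this, Nat.div_mul_cancel heven]
  have hdvdprod : (3 : ℕ) ∣ (n - 1) * (n - 2) := by
    rw [← hch]
    exact Dvd.dvd.mul_right hdvdDom 2
  rcases (Nat.Prime.dvd_mul Nat.prime_three).mp hdvdprod with h3 | h3 <;> omega

/-- Parts 2/3 common lemma. -/
lemma sqs_key {n : ℕ} (Q P : Finset (Finset (Fin n)))
    (hQ4 : ∀ b ∈ Q, b.card = 4)
    (hSQS : ∀ t : Finset (Fin n), t.card = 3 → ∃! b, b ∈ Q ∧ t ⊆ b)
    (hP6 : ∀ v ∈ P, v.card = 6)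
    (hPint : ∀ u ∈ P, ∀ v ∈ P, u ≠ v → (u ∩ v).card ≤ 3)
    (hfour : ∀ b : Finset (Fin n), b.card = 4 →
      Xor' (b ∈ Q ∧ ∀ v ∈ P, ¬ b ⊆ v) (∃! v, v ∈ P ∧ b ⊆ v))
    (t1 t2 b : Finset (Fin n)) (hb : b ∈ Q) (hbeq : b = t1 ∪ t2)
    (ht1 : t1.card = 3) (ht2 : t2.card = 3) (hmeet : (t1 ∩ t2).card = 2)
    (hdisj : ∀ u ∈ P, ¬ (t1 ⊆ u ∧ t2 ⊆ u))
    (v : Finset (Fin n)) (hvP : v ∈ P) (hv : t1 ⊆ v) :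
    (P.filter (fun u => t2 ⊆ u ∧ (u ∩ v).card = 3)).card = 3 := by
  classical
  have ht1b : t1 ⊆ b := hbeq ▸ subset_union_left
  have ht2b : t2 ⊆ b := hbeq ▸ subset_union_right
  -- c : the unique element of t2 \ t1
  have hc1 : (t2 \ t1).card = 1 := by
    have := card_sdiff_add_card_inter t2 t1
    rw [inter_comm] at this
    omega
  obtain ⟨c, hc⟩ := card_eq_one.mp hc1
  have hcmem : c ∈ t2 \ t1 := hc ▸ mem_singleton_self c
  have hct2 : c ∈ t2 := (mem_sdiff.mp hcmem).1
  have hct1 : c ∉ t1 := (mem_sdiff.mp hcmem).2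
  have hbic : b = insert c t1 := by
    apply Subset.antisymm
    · rw [hbeq]
      apply union_subset (subset_insert c t1)
      intro z hz
      by_cases hzc : z = c
      · exact hzc ▸ mem_insert_self c t1
      · have : z ∉ t2 \ t1 := by rw [hc]; simp [hzc]
        exact mem_insert_of_mem (by simpa [mem_sdiff, hz] using this)
    · exact insert_subset (hbeq ▸ mem_union_right t1 hct2) ht1b
  have hcv : c ∉ v := by
    intro hcvmem
    apply hdisj v hvP
    refine ⟨hv, fun z hz => ?_⟩
    by_cases hzc : z = c
    · exact hzc ▸ hcvmem
    · have : z ∉ t2 \ t1 := by rw [hc]; simp [hzc]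
      exact hv (by simpa [mem_sdiff, hz] using this)
  have hvb : v \ b = v \ t1 := by
    ext z
    simp only [mem_sdiff, hbic, mem_insert]
    constructor
    · rintro ⟨hzv, hzb⟩; exact ⟨hzv, fun h => hzb (Or.inr h)⟩
    · rintro ⟨hzv, hzt1⟩
      refine ⟨hzv, fun h => ?_⟩
      rcases h with h | h
      · exact hcv (h ▸ hzv)
      · exact hzt1 h
  have hDcard : (v \ b).card = 3 := by
    rw [hvb, card_sdiff_of_subset hv, hP6 v hvP, ht1]
  -- for each d in v \ b, a unique member containing insert d t2
  have exu : ∀ d ∈ v \ b, ∃! z, z ∈ P ∧ insert d t2 ⊆ z := by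
    intro d hd
    obtain ⟨hdv, hdb⟩ := mem_sdiff.mp hd
    have hdt2 : d ∉ t2 := fun h => hdb (ht2b h)
    have hcard : (insert d t2).card = 4 := by rw [card_insert_of_notMem hdt2, ht2]
    have hnQ : insert d t2 ∉ Q := by
      intro hQmem
      have : insert d t2 = b :=
        (hSQS t2 ht2).unique ⟨hQmem, subset_insert _ _⟩ ⟨hb, ht2b⟩
      exact hdb (this ▸ mem_insert_self d t2)
    rcases hfour (insert d t2) hcard with ⟨⟨hA1, _⟩, _⟩ | ⟨hB, _⟩
    · exact absurd hA1 hnQ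
    · exact hB
  have hit12 : t1 ∩ t2 ⊆ v := (inter_subset_left).trans hv
  -- the bijection
  apply (Finset.card_bij (fun d hd => Finset.choose _ P (exu d hd)) ?_ ?_ ?_).symm.trans hDcard
  · -- maps into the filter set
    intro d hd
    obtain ⟨hdv, hdb⟩ := mem_sdiff.mp hd
    have hzP := Finset.choose_mem _ P (exu d hd)
    have hzsub : insert d t2 ⊆ Finset.choose _ P (exu d hd) :=
      Finset.choose_property _ P (exu d hd)
    set z := Finset.choose _ P (exu d hd) with hz
    have ht2z : t2 ⊆ z := (subset_insert d t2).trans hzsub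
    have hznev : z ≠ v := fun h => hcv (h ▸ ht2z hct2)
    have hle : (z ∩ v).card ≤ 3 := hPint z hzP v hvP hznev
    have hge : insert d (t1 ∩ t2) ⊆ z ∩ v := by
      apply insert_subset (mem_inter.mpr ⟨hzsub (mem_insert_self d t2), hdv⟩)
      exact subset_inter ((inter_subset_right).trans ht2z) hit12
    have hdnotin : d ∉ t1 ∩ t2 := fun h => hdb (ht1b (mem_inter.mp h).1)
    have hgecard : 3 ≤ (z ∩ v).card := by
      have := card_le_card hge
      rwa [card_insert_of_notMem hdnotin, hmeet] at this
    exact mem_filter.mpr ⟨hzP, ht2z, le_antisymm hle hgecard⟩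
  · -- injective
    intro d1 hd1 d2 hd2 heq
    by_contra hne
    set z := Finset.choose _ P (exu d1 hd1) with hz
    have hzP := Finset.choose_mem _ P (exu d1 hd1)
    have hs1 : insert d1 t2 ⊆ z := Finset.choose_property _ P (exu d1 hd1)
    have heq' : (Finset.choose _ P (exu d1 hd1) : Finset (Fin n)) =
        Finset.choose _ P (exu d2 hd2) := heq
    have hs2 : insert d2 t2 ⊆ z := by
      rw [hz, heq']
      exact Finset.choose_property _ P (exu d2 hd2)
    have ht2z : t2 ⊆ z := (subset_insert d1 t2).trans hs1
    have hznev : z ≠ v := fun h => hcv (h ▸ ht2z hct2)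
    have hle : (z ∩ v).card ≤ 3 := hPint z hzP v hvP hznev
    have hd1v := (mem_sdiff.mp hd1).1
    have hd2v := (mem_sdiff.mp hd2).1
    have hd1b := (mem_sdiff.mp hd1).2
    have hd2b := (mem_sdiff.mp hd2).2
    have hsub : insert d1 (insert d2 (t1 ∩ t2)) ⊆ z ∩ v := by
      apply insert_subset (mem_inter.mpr ⟨hs1 (mem_insert_self d1 t2), hd1v⟩)
      apply insert_subset (mem_inter.mpr ⟨hs2 (mem_insert_self d2 t2), hd2v⟩)
      exact subset_inter ((inter_subset_right).trans ht2z) hit12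
    have hd2notin : d2 ∉ t1 ∩ t2 := fun h => hd2b (ht1b (mem_inter.mp h).1)
    have hd1notin : d1 ∉ insert d2 (t1 ∩ t2) := by
      simp only [mem_insert]
      rintro (h | h)
      · exact hne h
      · exact hd1b (ht1b (mem_inter.mp h).1)
    have := card_le_card hsub
    rw [card_insert_of_notMem hd1notin, card_insert_of_notMem hd2notin, hmeet] at this
    omega
  · -- surjective
    intro z hzmem
    obtain ⟨hzP, ht2z, hzv3⟩ := mem_filter.mp hzmem
    have hsubvz : t1 ∩ t2 ⊆ z ∩ v := subset_inter ((inter_subset_right).trans ht2z) hit12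
    have hexd : ((z ∩ v) \ (t1 ∩ t2)).Nonempty := by
      rw [← card_pos, card_sdiff_of_subset hsubvz, hzv3, hmeet]
      omega
    obtain ⟨d, hd⟩ := hexd
    obtain ⟨hdzv, hdnot⟩ := mem_sdiff.mp hd
    obtain ⟨hdz, hdv⟩ := mem_inter.mp hdzv
    have hdb : d ∉ b := by
      rw [hbic]
      simp only [mem_insert]
      rintro (h | h)
      · exact hcv (h ▸ hdv)
      · -- d ∈ t1, then t1 ⊆ z, contradicting hdisj
        have hdt2 : d ∉ t2 := fun h2 => hdnot (mem_inter.mpr ⟨h, h2⟩)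
        have hd12 : d ∈ t1 \ t2 := mem_sdiff.mpr ⟨h, hdt2⟩
        have hsd : t1 \ t2 = {d} := by
          apply (eq_of_subset_of_card_le (singleton_subset_iff.mpr hd12) ?_).symm
          have := card_sdiff_add_card_inter t1 t2
          rw [card_singleton]
          omega
        have ht1z : t1 ⊆ z := by
          intro w hw
          by_cases hwt2 : w ∈ t2
          · exact ht2z hwt2
          · have : w ∈ t1 \ t2 := mem_sdiff.mpr ⟨hw, hwt2⟩
            rw [hsd, mem_singleton] at this
            exact this ▸ hdz
        exact hdisj z hzP ⟨ht1z, ht2z⟩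
    have hdmem : d ∈ v \ b := mem_sdiff.mpr ⟨hdv, hdb⟩
    refine ⟨d, hdmem, ?_⟩
    have h1 := Finset.choose_mem _ P (exu d hdmem)
    have h2 := Finset.choose_property _ P (exu d hdmem)
    exact (exu d hdmem).unique ⟨h1, h2⟩ ⟨hzP, insert_subset hdz ht2z⟩

theorem stmt_9 {n : ℕ} (Q P : Finset (Finset (Fin n)))
    (hQ4 : ∀ b ∈ Q, b.card = 4)
    (hSQS : ∀ t : Finset (Fin n), t.card = 3 → ∃! b, b ∈ Q ∧ t ⊆ b)
    (hP6 : ∀ v ∈ P, v.card = 6)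
    (hPint : ∀ u ∈ P, ∀ v ∈ P, u ≠ v → (u ∩ v).card ≤ 3)
    (hfour : ∀ b : Finset (Fin n), b.card = 4 →
      Xor' (b ∈ Q ∧ ∀ v ∈ P, ¬ b ⊆ v) (∃! v, v ∈ P ∧ b ⊆ v))
    (t1 t2 b : Finset (Fin n)) (hb : b ∈ Q) (hbeq : b = t1 ∪ t2)
    (ht1 : t1.card = 3) (ht2 : t2.card = 3) (hmeet : (t1 ∩ t2).card = 2) :
    (∀ v ∈ P, ¬ (t1 ⊆ v ∧ t2 ⊆ v)) ∧
    (∀ v ∈ P, t1 ⊆ v → (P.filter (fun u => t2 ⊆ u ∧ (u ∩ v).card = 3)).card = 3) ∧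
    (∀ v ∈ P, t2 ⊆ v → (P.filter (fun u => t1 ⊆ u ∧ (u ∩ v).card = 3)).card = 3) := by
  have hdisj := sqs_part1 Q P hQ4 hSQS hP6 hPint hfour t1 t2 b hb hbeq ht1 ht2 hmeet
  refine ⟨hdisj, ?_, ?_⟩
  · intro v hvP hv
    exact sqs_key Q P hQ4 hSQS hP6 hPint hfour t1 t2 b hb hbeq ht1 ht2 hmeet hdisj v hvP hv
  · intro v hvP hv
    have hbeq' : b = t2 ∪ t1 := by rw [hbeq, union_comm]
    have hmeet' : (t2 ∩ t1).card = 2 := by rw [inter_comm]; exact hmeet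
    have hdisj' : ∀ u ∈ P, ¬ (t2 ⊆ u ∧ t1 ⊆ u) := fun u hu h => hdisj u hu ⟨h.2, h.1⟩
    exact sqs_key Q P hQ4 hSQS hP6 hPint hfour t2 t1 b hb hbeq' ht2 ht1 hmeet' hdisj' v hvP hv
end

section
/- Let P be a family of 6-element subsets of {1,...,n}, n ≥ 16, pairwise intersecting in at most 3 elements, such that every 4-subset of {1,...,n} lies in at most one member of P and for each triple t the family C(t) = {v ∈ P : t ⊆ v} has size (n-4)/3 (with pairwise intersections exactly t). If t1 and t2 are triples such that C(t1) and C(t2) are disjoint and every member of each clique has exactly 3 neighbors (intersection of size 3) in the other, then |t1 ∩ t2| = 2 and t1 ∪ t2 is contained in no member of P. -/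
theorem stmt_10 {n : ℕ} (hn : 16 ≤ n) (P : Finset (Finset (Fin n)))
    (hcard : ∀ v ∈ P, v.card = 6)
    (hint : ∀ u ∈ P, ∀ v ∈ P, u ≠ v → (u ∩ v).card ≤ 3)
    (h4 : ∀ b : Finset (Fin n), b.card = 4 → (P.filter (fun v => b ⊆ v)).card ≤ 1)
    (hCt : ∀ t : Finset (Fin n), t.card = 3 →
      (P.filter (fun v => t ⊆ v)).card = (n - 4) / 3 ∧
      ∀ u ∈ P.filter (fun v => t ⊆ v), ∀ w ∈ P.filter (fun v => t ⊆ v),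
        u ≠ w → u ∩ w = t)
    (t1 t2 : Finset (Fin n)) (ht1 : t1.card = 3) (ht2 : t2.card = 3)
    (hnocommon : ¬ ∃ w ∈ P, t1 ⊆ w ∧ t2 ⊆ w)
    (hreg1 : ∀ v ∈ P, t1 ⊆ v →
      (P.filter (fun u => t2 ⊆ u ∧ (u ∩ v).card = 3)).card = 3)
    (hreg2 : ∀ v ∈ P, t2 ⊆ v →
      (P.filter (fun u => t1 ⊆ u ∧ (u ∩ v).card = 3)).card = 3) :
    (t1 ∩ t2).card = 2 ∧ ∀ v ∈ P, ¬ t1 ∪ t2 ⊆ v := by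
  have hm4 : 4 ≤ (n - 4) / 3 := by omega
  set m := (n - 4) / 3 with hmdef
  have part2 : ∀ v ∈ P, ¬ t1 ∪ t2 ⊆ v := by
    intro v hv hsub
    rw [Finset.union_subset_iff] at hsub
    exact hnocommon ⟨v, hv, hsub.1, hsub.2⟩
  refine ⟨?_, part2⟩
  -- Key lemma: every u ∈ P containing t2 meets t1 in exactly 2 points
  have keyA : ∀ u ∈ P, t2 ⊆ u → (t1 ∩ u).card = 2 := by
    intro u hu ht2u
    have h3 := hreg2 u hu ht2u
    obtain ⟨v1, v2, v3, h12, h13, h23, hS⟩ := Finset.card_eq_three.mp h3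
    have mem1 : v1 ∈ P.filter (fun w => t1 ⊆ w ∧ (w ∩ u).card = 3) := by
      rw [hS]; simp
    have mem2 : v2 ∈ P.filter (fun w => t1 ⊆ w ∧ (w ∩ u).card = 3) := by
      rw [hS]; simp
    have mem3 : v3 ∈ P.filter (fun w => t1 ⊆ w ∧ (w ∩ u).card = 3) := by
      rw [hS]; simp
    simp only [Finset.mem_filter] at mem1 mem2 mem3
    obtain ⟨hv1P, ht1v1, hc1⟩ := mem1
    obtain ⟨hv2P, ht1v2, hc2⟩ := mem2
    obtain ⟨hv3P, ht1v3, hc3⟩ := mem3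
    have sunflower := (hCt t1 ht1).2
    have mf1 : v1 ∈ P.filter (fun v => t1 ⊆ v) := Finset.mem_filter.mpr ⟨hv1P, ht1v1⟩
    have mf2 : v2 ∈ P.filter (fun v => t1 ⊆ v) := Finset.mem_filter.mpr ⟨hv2P, ht1v2⟩
    have mf3 : v3 ∈ P.filter (fun v => t1 ⊆ v) := Finset.mem_filter.mpr ⟨hv3P, ht1v3⟩
    have e12 : v1 ∩ v2 = t1 := sunflower v1 mf1 v2 mf2 h12
    have e13 : v1 ∩ v3 = t1 := sunflower v1 mf1 v3 mf3 h13
    have e23 : v2 ∩ v3 = t1 := sunflower v2 mf2 v3 mf3 h23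
    -- k ≤ 2
    have kne3 : ¬ t1 ⊆ u := by
      intro ht1u; exact hnocommon ⟨u, hu, ht1u, ht2u⟩
    have hk2 : (t1 ∩ u).card ≤ 2 := by
      by_contra h
      push_neg at h
      have hsub : t1 ∩ u ⊆ t1 := Finset.inter_subset_left
      have : t1 ∩ u = t1 := Finset.eq_of_subset_of_card_le hsub (by omega)
      exact kne3 (by rw [← this]; exact Finset.inter_subset_right)
    have hA12 : (v1 ∩ u) ∩ (v2 ∩ u) = t1 ∩ u := by
      rw [← e12]; ext x; simp only [Finset.mem_inter]; tauto
    have hA3 : ((v1 ∩ u) ∪ (v2 ∩ u)) ∩ (v3 ∩ u) = t1 ∩ u := by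
      have m13 : ∀ x, x ∈ v1 ∧ x ∈ v3 ↔ x ∈ t1 := by
        intro x; rw [← Finset.mem_inter, e13]
      have m23 : ∀ x, x ∈ v2 ∧ x ∈ v3 ↔ x ∈ t1 := by
        intro x; rw [← Finset.mem_inter, e23]
      ext x
      have h1 := m13 x
      have h2 := m23 x
      simp only [Finset.mem_inter, Finset.mem_union]
      tauto
    have c12 : ((v1 ∩ u) ∪ (v2 ∩ u)).card + (t1 ∩ u).card = 6 := by
      rw [← hA12]
      rw [Finset.card_union_add_card_inter, hc1, hc2]
    have c123 : ((v1 ∩ u) ∪ (v2 ∩ u) ∪ (v3 ∩ u)).card + (t1 ∩ u).card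
        = ((v1 ∩ u) ∪ (v2 ∩ u)).card + 3 := by
      rw [← hA3, Finset.card_union_add_card_inter, hc3]
    have hle : ((v1 ∩ u) ∪ (v2 ∩ u) ∪ (v3 ∩ u)).card ≤ 6 := by
      have : (v1 ∩ u) ∪ (v2 ∩ u) ∪ (v3 ∩ u) ⊆ u := by
        intro x hx
        simp only [Finset.mem_union, Finset.mem_inter] at hx
        tauto
      calc _ ≤ u.card := Finset.card_le_card this
        _ = 6 := hcard u hu
    omega
  -- Double counting
  set C2 := P.filter (fun v => t2 ⊆ v) with hC2
  have hC2card : C2.card = m := (hCt t2 ht2).1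
  have hsum1 : ∑ u ∈ C2, (t1 ∩ u).card = 2 * m := by
    rw [Finset.sum_congr rfl (fun u hu => ?_), Finset.sum_const, hC2card, smul_eq_mul, mul_comm]
    rw [hC2, Finset.mem_filter] at hu
    exact keyA u hu.1 hu.2
  have hsum2 : ∑ u ∈ C2, (t1 ∩ u).card
      = ∑ x ∈ t1, (C2.filter (fun u => x ∈ u)).card := by
    have : ∀ u, (t1 ∩ u).card = ∑ x ∈ t1, if x ∈ u then 1 else 0 := by
      intro u
      rw [← Finset.filter_mem_eq_inter, Finset.card_filter]
    simp only [this]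
    rw [Finset.sum_comm]
    refine Finset.sum_congr rfl fun x _ => ?_
    rw [Finset.card_filter]
  set a := (t1 ∩ t2).card with ha
  have hane3 : a ≠ 3 := by
    intro ha3
    have h1 : t1 ∩ t2 = t1 :=
      Finset.eq_of_subset_of_card_le Finset.inter_subset_left (by omega)
    have h2 : t1 ⊆ t2 := by rw [← h1]; exact Finset.inter_subset_right
    have heq : t1 = t2 := Finset.eq_of_subset_of_card_le h2 (by omega)
    have : C2.Nonempty := by
      rw [← Finset.card_pos, hC2card]; omega
    obtain ⟨w, hw⟩ := this
    rw [hC2, Finset.mem_filter] at hw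
    exact hnocommon ⟨w, hw.1, heq ▸ hw.2, hw.2⟩
  have hbound : ∑ x ∈ t1, (C2.filter (fun u => x ∈ u)).card
      ≤ ∑ x ∈ t1, (if x ∈ t2 then m else 1) := by
    refine Finset.sum_le_sum fun x hx => ?_
    by_cases hxt2 : x ∈ t2
    · simp only [hxt2, if_true]
      rw [← hC2card]
      exact Finset.card_le_card (Finset.filter_subset _ _)
    · simp only [hxt2, if_false]
      refine Finset.card_le_one.mpr fun u1 h1 u2 h2 => ?_
      simp only [hC2, Finset.mem_filter] at h1 h2
      by_contra hne
      have := (hCt t2 ht2).2 u1 (Finset.mem_filter.mpr ⟨h1.1.1, h1.1.2⟩)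
        u2 (Finset.mem_filter.mpr ⟨h2.1.1, h2.1.2⟩) hne
      have hx12 : x ∈ u1 ∩ u2 := Finset.mem_inter.mpr ⟨h1.2, h2.2⟩
      rw [this] at hx12
      exact hxt2 hx12
  have hsplit : ∑ x ∈ t1, (if x ∈ t2 then m else 1) = a * m + (3 - a) := by
    rw [Finset.sum_ite, Finset.sum_const, Finset.sum_const, smul_eq_mul, smul_eq_mul,
      mul_one]
    have h1 : (t1.filter (fun x => x ∈ t2)).card = a := by
      rw [Finset.filter_mem_eq_inter]
    have h2 : (t1.filter (fun x => ¬ x ∈ t2)).card = 3 - a := by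
      have := Finset.card_filter_add_card_filter_not (s := t1)
        (p := fun x => x ∈ t2)
      omega
    rw [h1, h2]
  have hfinal : 2 * m ≤ a * m + (3 - a) := by
    rw [← hsum1, hsum2, ← hsplit]; exact hbound
  have hale : a ≤ 3 := by
    have : t1 ∩ t2 ⊆ t1 := Finset.inter_subset_left
    have := Finset.card_le_card this
    omega
  interval_cases a
  · omega
  · omega
  · rfl
  · exact absurd rfl hane3
end

section
/- For n ≥ 20, and a family P of 6-element subsets of {1,...,n} with pairwise intersections of size at most 3, such that for each 3-subset t of {1,...,n} there is a unique point X(t) with the property that every 4-subset containing t other than t ∪ {X(t)} is contained in exactly one member of P (and t ∪ {X(t)} in none), the family C(t) = {v ∈ P : t ⊆ v} has exactly (n-4)/3 members, any two of which intersect exactly in t. -/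
theorem stmt_11 {n : ℕ} (hn : 20 ≤ n) (P : Finset (Finset (Fin n)))
    (hcard : ∀ v ∈ P, v.card = 6)
    (hint : ∀ u ∈ P, ∀ v ∈ P, u ≠ v → (u ∩ v).card ≤ 3)
    (hX : ∀ t : Finset (Fin n), t.card = 3 →
      ∃! x : Fin n, x ∉ t ∧ (∀ v ∈ P, ¬ insert x t ⊆ v) ∧
        ∀ b : Finset (Fin n), b.card = 4 → t ⊆ b → b ≠ insert x t →
          ∃! v, v ∈ P ∧ b ⊆ v) :
    ∀ t : Finset (Fin n), t.card = 3 →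
      (P.filter (fun v => t ⊆ v)).card = (n - 4) / 3 ∧
      ∀ u ∈ P.filter (fun v => t ⊆ v), ∀ w ∈ P.filter (fun v => t ⊆ v),
        u ≠ w → u ∩ w = t := by
  intro t ht
  set Ct := P.filter (fun v => t ⊆ v) with hCt
  have hmem : ∀ v ∈ Ct, v ∈ P ∧ t ⊆ v := by
    intro v hv; simpa [hCt, Finset.mem_filter] using hv
  have hintC : ∀ u ∈ Ct, ∀ w ∈ Ct, u ≠ w → u ∩ w = t := by
    intro u hu w hw huw
    obtain ⟨huP, hut⟩ := hmem u hu
    obtain ⟨hwP, hwt⟩ := hmem w hw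
    have h1 : t ⊆ u ∩ w := Finset.subset_inter hut hwt
    have h2 : (u ∩ w).card ≤ t.card := by rw [ht]; exact hint u huP w hwP huw
    exact (Finset.eq_of_subset_of_card_le h1 h2).symm
  refine ⟨?_, hintC⟩
  obtain ⟨x, ⟨hxt, hxP, hxuniq⟩, -⟩ := hX t ht
  have hcard4 : (insert x t).card = 4 := by
    rw [Finset.card_insert_of_notMem hxt, ht]
  have hSeq : (Finset.univ : Finset (Fin n)) \ insert x t
      = Ct.biUnion (fun v => v \ t) := by
    ext y
    simp only [Finset.mem_sdiff, Finset.mem_univ, true_and, Finset.mem_biUnion,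
      Finset.mem_insert, not_or]
    constructor
    · rintro ⟨hyx, hyt⟩
      have hb4 : (insert y t).card = 4 := by
        rw [Finset.card_insert_of_notMem hyt, ht]
      have hbne : insert y t ≠ insert x t := by
        intro h
        have hx' : x ∈ insert y t := h ▸ Finset.mem_insert_self x t
        rcases Finset.mem_insert.1 hx' with h' | h'
        · exact hyx h'.symm
        · exact hxt h'
      obtain ⟨v, ⟨hvP, hbv⟩, -⟩ := hxuniq (insert y t) hb4 (Finset.subset_insert y t) hbne
      refine ⟨v, Finset.mem_filter.2 ⟨hvP, (Finset.subset_insert y t).trans hbv⟩,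
        ⟨hbv (Finset.mem_insert_self y t), hyt⟩⟩
    · rintro ⟨v, hv, hyv⟩
      obtain ⟨hvP, htv⟩ := hmem v hv
      obtain ⟨hyv', hyt⟩ := hyv
      refine ⟨fun h => ?_, hyt⟩
      exact hxP v hvP (Finset.insert_subset (h ▸ hyv') htv)
  have hdisj : ∀ u ∈ Ct, ∀ w ∈ Ct, u ≠ w → Disjoint (u \ t) (w \ t) := by
    intro u hu w hw huw
    rw [Finset.disjoint_left]
    intro a ha hb
    obtain ⟨hau, hat⟩ := Finset.mem_sdiff.1 ha
    obtain ⟨haw, -⟩ := Finset.mem_sdiff.1 hb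
    have hmem' : a ∈ u ∩ w := Finset.mem_inter.2 ⟨hau, haw⟩
    rw [hintC u hu w hw huw] at hmem'
    exact hat hmem'
  have h3 : ∀ v ∈ Ct, (v \ t).card = 3 := by
    intro v hv
    obtain ⟨hvP, htv⟩ := hmem v hv
    rw [Finset.card_sdiff_of_subset htv, hcard v hvP, ht]
  have hcount : n - 4 = 3 * Ct.card := by
    have hL : (Finset.univ \ insert x t : Finset (Fin n)).card = n - 4 := by
      rw [Finset.card_sdiff_of_subset (Finset.subset_univ _), hcard4, Finset.card_univ,
        Fintype.card_fin]
    rw [← hL, hSeq, Finset.card_biUnion hdisj, Finset.sum_congr rfl h3,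
      Finset.sum_const, smul_eq_mul, mul_comm]
  omega
end
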